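/- Let p ≥ 1 and q ≥ 0 be integers, let every terminal pair (s_i, t_i) be (p, q)-flex-connected in H, and let F = δ_H(S₀) be a violating edge set. Let 0 < α ≤ 1/2 and let x̃ : E → ℝ≥0 be capacities such that x̃(e) = α for every e ∈ H and such that Σ_{e ∈ δ_{E ∖ H}(S)} x̃(e) ≥ 1 for every violated vertex set S. Let y be the induced tree-edge capacities and suppose the tree is good for F, i.e. Σ_{f ∈ M^{-1}(F)} y(f) ≤ 1/2. Then for every (A, B) ∈ Z_F and every vertex set S ⊆ V(𝒯) such that every leaf with M1-image in A lies in S and no leaf with M1-image in B lies in S, we have Σ_{f ∈ δ_{E(𝒯)}(S), f ∉ M^{-1}(F)} y(f) ≥ α. -/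

import Mathlib

open scoped Classical

/-- The edges of `H` with exactly one endpoint in `S` (the cut `δ_H(S)`).
Edges are abstract objects of type `E` with endpoint maps `g₁ g₂ : E → V`. -/
noncomputable def cutEdges {V E : Type*} (g₁ g₂ : E → V) (H : Finset E) (S : Finset V) :
    Finset E :=
  H.filter fun e => (g₁ e ∈ S) ≠ (g₂ e ∈ S)

/-- `u` and `v` are connected by a path using only edges of `H`. -/
def ConnectedIn {V E : Type*} (g₁ g₂ : E → V) (H : Finset E) (u v : V) : Prop :=
  Relation.ReflTransGen (fun a b => ∃ e ∈ H, (g₁ e = a ∧ g₂ e = b) ∨ (g₁ e = b ∧ g₂ e = a)) u v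

/-- `u` and `v` are `p`-edge-connected in `H`: for every `D ⊆ H` with `|D| ≤ p - 1`,
`u` and `v` are connected in `H \ D`. -/
def PEdgeConnected {V E : Type*} (g₁ g₂ : E → V) (p : ℕ) (H : Finset E) (u v : V) : Prop :=
  ∀ D : Finset E, D ⊆ H → D.card ≤ p - 1 → ConnectedIn g₁ g₂ (H \ D) u v

/-- `u` and `v` are `(p,q)`-flex-connected in `H` (with unsafe edge set `Unsafe`):
for every `U ⊆ Unsafe` with `|U| ≤ q`, `u` and `v` are `p`-edge-connected in `H \ U`. -/
def FlexConnected {V E : Type*} (g₁ g₂ : E → V) (Unsafe : Finset E) (p q : ℕ)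
    (H : Finset E) (u v : V) : Prop :=
  ∀ U : Finset E, U ⊆ Unsafe → U.card ≤ q → PEdgeConnected g₁ g₂ p (H \ U) u v

/-- A vertex set `S` is violated (w.r.t. the partial solution `H`, safe edges `Safe`,
parameters `p q` and terminal pairs `st`): exactly one of `s_i, t_i` lies in `S` for
some `i`, `|δ_H(S)| = p + q`, and `|δ_H(S) ∩ Safe| ≤ p - 1`. -/
def Violated {V E : Type*} (g₁ g₂ : E → V) (Safe : Finset E) (p q : ℕ) {k : ℕ}
    (st : Fin k → V × V) (H : Finset E) (S : Finset V) : Prop :=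
  (∃ i : Fin k, ((st i).1 ∈ S) ≠ ((st i).2 ∈ S)) ∧
    (cutEdges g₁ g₂ H S).card = p + q ∧
    (cutEdges g₁ g₂ H S ∩ Safe).card ≤ p - 1

/-- `(t₁, t₂ : TE → TV)` describes a (multi)graph which is a tree: it is connected and
every edge is a bridge. -/
def IsTree' {TV TE : Type*} [Fintype TE] (t₁ t₂ : TE → TV) : Prop :=
  (∀ a b : TV, ConnectedIn t₁ t₂ Finset.univ a b) ∧
    ∀ f : TE, ¬ ConnectedIn t₁ t₂ (Finset.univ \ {f}) (t₁ f) (t₂ f)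

/-- `V_f`: the `M1`-images of the leaves (elements of `L`) lying in the connected component
of the tree with `f` deleted that contains the endpoint `t₁ f`. -/
noncomputable def compVerts {V TV TE : Type*} [Fintype TE] (t₁ t₂ : TE → TV)
    (M1 : TV → V) (L : Finset TV) (f : TE) : Finset V :=
  (L.filter fun a => ConnectedIn t₁ t₂ (Finset.univ \ {f}) a (t₁ f)).image M1

/-- The capacity `y(f) = Σ_{e ∈ δ_E(V_f)} x(e)` induced on a tree edge `f` by
capacities `x` on the edges of `G`. -/
noncomputable def treeCap {V E TV TE : Type*} [Fintype E] [Fintype TE]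
    (g₁ g₂ : E → V) (t₁ t₂ : TE → TV) (M1 : TV → V) (L : Finset TV)
    (x : E → NNReal) (f : TE) : NNReal :=
  ∑ e ∈ cutEdges g₁ g₂ Finset.univ (compVerts t₁ t₂ M1 L f), x e

/-- `M^{-1}(F)`: tree edges `f` with `M2(f) ∩ F ≠ ∅`. -/
noncomputable def Minv {E TE : Type*} [Fintype TE] (M2 : TE → Finset E) (F : Finset E) :
    Finset TE :=
  Finset.univ.filter fun f => (M2 f ∩ F).Nonempty

/-- `M(E') = ⋃_{f ∈ E'} M2(f)`. -/
noncomputable def Mimg {E TE : Type*} (M2 : TE → Finset E) (E' : Finset TE) : Finset E :=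
  E'.biUnion M2

/-- The connected component containing `v` of the graph on `V` with edge set `H`. -/
noncomputable def Qcomp {V E : Type*} [Fintype V] (g₁ g₂ : E → V) (H : Finset E) (v : V) :
    Finset V :=
  Finset.univ.filter fun u => ConnectedIn g₁ g₂ H u v

/-- A vertex set `Q` is shattered (w.r.t. the tree and `M^{-1}(F)`): the leaves whose
`M1`-images lie in `Q` are not all in a single connected component of the tree with the
edges of `M^{-1}(F)` deleted. -/
def IsShattered {V E TV TE : Type*} [Fintype TE] (t₁ t₂ : TE → TV) (M1 : TV → V)
    (L : Finset TV) (M2 : TE → Finset E) (F : Finset E) (Q : Finset V) : Prop :=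
  ∃ a ∈ L, ∃ b ∈ L, M1 a ∈ Q ∧ M1 b ∈ Q ∧
    ¬ ConnectedIn t₁ t₂ (Finset.univ \ Minv M2 F) a b

/-- `Z_F`: the pairs `(A ∪ Q_{s_i}, B ∪ Q_{t_i})` over `i ∈ [k]` and pairs `(A, B)`
partitioning the union of the shattered components of `(V, H \ F)`, each shattered
component lying entirely in `A` or entirely in `B`, such that the two sets of the pair
are disjoint. -/
def ZF {V E TV TE : Type*} [Fintype V] [Fintype TE] (g₁ g₂ : E → V) (t₁ t₂ : TE → TV)
    (M1 : TV → V) (L : Finset TV) (M2 : TE → Finset E) {k : ℕ} (st : Fin k → V × V)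
    (H F : Finset E) : Set (Finset V × Finset V) :=
  { P | ∃ i : Fin k, ∃ A B : Finset V,
      Disjoint A B ∧
      A ∪ B = Finset.univ.filter
        (fun v => IsShattered t₁ t₂ M1 L M2 F (Qcomp g₁ g₂ (H \ F) v)) ∧
      (∀ v : V, IsShattered t₁ t₂ M1 L M2 F (Qcomp g₁ g₂ (H \ F) v) →
        Qcomp g₁ g₂ (H \ F) v ⊆ A ∨ Qcomp g₁ g₂ (H \ F) v ⊆ B) ∧
      P.1 = A ∪ Qcomp g₁ g₂ (H \ F) (st i).1 ∧
      P.2 = B ∪ Qcomp g₁ g₂ (H \ F) (st i).2 ∧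
      Disjoint P.1 P.2 }

/-- The number of shattered connected components of `(V, H \ F)`. -/
noncomputable def shatteredCount {V E TV TE : Type*} [Fintype V] [Fintype TE]
    (g₁ g₂ : E → V) (t₁ t₂ : TE → TV) (M1 : TV → V) (L : Finset TV)
    (M2 : TE → Finset E) (H F : Finset E) : ℕ :=
  ((Finset.univ.image fun v => Qcomp g₁ g₂ (H \ F) v).filter
    fun Q => IsShattered t₁ t₂ M1 L M2 F Q).card

/-!
Let `W ⊆ V` be the set of vertices whose leaf lies in `S`; it contains the first and avoids the
second set of the pair. If an edge `e` of `H ∖ F` crosses `W`, its component in `H ∖ F` lies in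
neither set of the pair, so it is intact: the leaves of the ends of `e` are joined in `𝒯`
avoiding `M⁻¹(F)`, and the edge of `δ(S)` separating them lies outside `M⁻¹(F)` and has capacity
at least `x̃(e) = α`. Otherwise `δ_H(W) ⊆ F`, and flex-connectivity of the terminal pair
separated by `W` forces `δ_H(W) = F`; so `W` is violated and `δ_{E ∖ H}(W)` has capacity at
least `1`. Every edge of that cut is cut by `V_f` for some `f ∈ δ(S)`, so `δ(S)` has capacity at
least `1`, at most `1/2` of it in `M⁻¹(F)`, and `1/2 ≥ α`.
-/

open Finset

theorem Finset.sum_biUnion_le_sum_sum {ι κ M : Type*} [DecidableEq ι] [AddCommMonoid M]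
    [PartialOrder M] [CanonicallyOrderedAdd M] (T : Finset κ) (c : κ → Finset ι) (f : ι → M) :
    ∑ i ∈ T.biUnion c, f i ≤ ∑ j ∈ T, ∑ i ∈ c j, f i := by
  rw [← sup_eq_biUnion]
  refine apply_sup_le_sum (f := fun s => ∑ i ∈ s, f i) sum_empty (fun {s t} => ?_) T
  rw [sup_eq_union, ← sum_union_inter]
  exact le_self_add

theorem Finset.mem_image_iff_of_injOn {α β : Type*} [DecidableEq β] {f : α → β}
    {s t : Finset α} {a : α} (hf : Set.InjOn f s) (ht : t ⊆ s) (ha : a ∈ s) :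
    f a ∈ t.image f ↔ a ∈ t := by
  rw [← mem_coe, coe_image]
  exact hf.mem_image_iff ht ha

namespace ConnectedIn

variable {V E : Type*} {g₁ g₂ : E → V} {H K : Finset E} {S : Finset V} {a b c : V}

theorem refl (H : Finset E) (a : V) : ConnectedIn g₁ g₂ H a a :=
  Relation.ReflTransGen.refl

theorem trans (h : ConnectedIn g₁ g₂ H a b) (h' : ConnectedIn g₁ g₂ H b c) :
    ConnectedIn g₁ g₂ H a c :=
  Relation.ReflTransGen.trans h h'

theorem symm (h : ConnectedIn g₁ g₂ H a b) : ConnectedIn g₁ g₂ H b a := by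
  induction h with
  | refl => exact refl H _
  | tail _ hstep ih =>
    obtain ⟨e, he, hends⟩ := hstep
    exact Relation.ReflTransGen.head ⟨e, he, hends.symm⟩ ih

theorem mono (hHK : H ⊆ K) (h : ConnectedIn g₁ g₂ H a b) : ConnectedIn g₁ g₂ K a b :=
  Relation.ReflTransGen.mono (fun _ _ ⟨e, he, hends⟩ => ⟨e, hHK he, hends⟩) _ _ h

theorem of_mem {e : E} (he : e ∈ H) : ConnectedIn g₁ g₂ H (g₁ e) (g₂ e) :=
  Relation.ReflTransGen.single ⟨e, he, Or.inl ⟨rfl, rfl⟩⟩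

theorem cutEdges_nonempty (h : ConnectedIn g₁ g₂ H a b) (ha : a ∈ S) (hb : b ∉ S) :
    (cutEdges g₁ g₂ H S).Nonempty := by
  induction h with
  | refl => exact absurd ha hb
  | @tail c d _ hstep ih =>
    by_cases hc : c ∈ S
    · obtain ⟨e, he, hends | hends⟩ := hstep <;>
        exact ⟨e, Finset.mem_filter.2 ⟨he, by simp [hends.1, hends.2, hc, hb]⟩⟩
    · exact ih hc

theorem sdiff_singleton_or (h : ConnectedIn g₁ g₂ H a b) (d : E) :
    ConnectedIn g₁ g₂ (H \ {d}) a b ∨ ConnectedIn g₁ g₂ (H \ {d}) a (g₁ d) ∨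
      ConnectedIn g₁ g₂ (H \ {d}) a (g₂ d) := by
  induction h with
  | refl => exact Or.inl (refl _ _)
  | tail _ hstep ih =>
    rcases ih with ih | ih | ih
    · obtain ⟨e, he, hends⟩ := hstep
      by_cases hed : e = d
      · subst hed
        rcases hends with ⟨h1, -⟩ | ⟨-, h2⟩
        · exact Or.inr (Or.inl (h1 ▸ ih))
        · exact Or.inr (Or.inr (h2 ▸ ih))
      · exact Or.inl (Relation.ReflTransGen.tail ih ⟨e, by simp [he, hed], hends⟩)
    · exact Or.inr (Or.inl ih)
    · exact Or.inr (Or.inr ih)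

end ConnectedIn

namespace IsTree'

variable {TV TE : Type*} [Fintype TE] {t₁ t₂ : TE → TV} {a b : TV}

theorem connectedIn_sdiff_singleton_or (htree : IsTree' t₁ t₂) (f : TE) (a : TV) :
    ConnectedIn t₁ t₂ (univ \ {f}) a (t₁ f) ∨ ConnectedIn t₁ t₂ (univ \ {f}) a (t₂ f) := by
  rcases (htree.1 a (t₁ f)).sdiff_singleton_or f with h | h | h
  · exact Or.inl h
  · exact Or.inl h
  · exact Or.inr h

theorem connectedIn_sdiff_singleton_iff (htree : IsTree' t₁ t₂) (f : TE) (a b : TV) :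
    ConnectedIn t₁ t₂ (univ \ {f}) a b ↔
      (ConnectedIn t₁ t₂ (univ \ {f}) a (t₁ f) ↔ ConnectedIn t₁ t₂ (univ \ {f}) b (t₁ f)) := by
  refine ⟨fun h => ⟨h.symm.trans, h.trans⟩, fun hiff => ?_⟩
  by_cases ha : ConnectedIn t₁ t₂ (univ \ {f}) a (t₁ f)
  · exact ha.trans (hiff.1 ha).symm
  · have hb : ¬ ConnectedIn t₁ t₂ (univ \ {f}) b (t₁ f) := mt hiff.2 ha
    have ha₂ := (htree.connectedIn_sdiff_singleton_or f a).resolve_left ha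
    exact ha₂.trans ((htree.connectedIn_sdiff_singleton_or f b).resolve_left hb).symm

theorem connectedIn_sdiff_singleton {K : Finset TE} {d : TE} (htree : IsTree' t₁ t₂)
    (h : ConnectedIn t₁ t₂ K a b) (hd : ConnectedIn t₁ t₂ (univ \ {d}) a b) :
    ConnectedIn t₁ t₂ (K \ {d}) a b := by
  have hsub : K \ {d} ⊆ univ \ {d} := sdiff_subset_sdiff (subset_univ K) subset_rfl
  -- reaching the two ends of `d` from `a` and `b` avoiding `d` would make `d` no bridge
  have hbridge : ∀ {u v : TV}, ConnectedIn t₁ t₂ (K \ {d}) u (t₁ d) →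
      ConnectedIn t₁ t₂ (K \ {d}) v (t₂ d) → ConnectedIn t₁ t₂ (univ \ {d}) u v → False :=
    fun hu hv huv => htree.2 d (((hu.mono hsub).symm.trans huv).trans (hv.mono hsub))
  rcases h.sdiff_singleton_or d with h' | ha₁ | ha₂
  · exact h'
  all_goals rcases h.symm.sdiff_singleton_or d with h' | hb₁ | hb₂
  · exact h'.symm
  · exact ha₁.trans hb₁.symm
  · exact (hbridge ha₁ hb₂ hd).elim
  · exact h'.symm
  · exact (hbridge hb₁ ha₂ hd.symm).elim
  · exact ha₂.trans hb₂.symm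

theorem connectedIn_sdiff (htree : IsTree' t₁ t₂) (D : Finset TE)
    (hD : ∀ d ∈ D, ConnectedIn t₁ t₂ (univ \ {d}) a b) :
    ConnectedIn t₁ t₂ (univ \ D) a b := by
  induction D using Finset.induction with
  | empty => simpa using htree.1 a b
  | insert d D _ ih =>
    rw [sdiff_insert, ← sdiff_singleton_eq_erase]
    exact htree.connectedIn_sdiff_singleton (ih fun d' hd' => hD d' (mem_insert_of_mem hd'))
      (hD d (mem_insert_self d D))

theorem exists_cutEdges_not_connectedIn (htree : IsTree' t₁ t₂) {S : Finset TV}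
    (ha : a ∈ S) (hb : b ∉ S) :
    ∃ f ∈ cutEdges t₁ t₂ univ S, ¬ ConnectedIn t₁ t₂ (univ \ {f}) a b := by
  by_contra! hcon
  obtain ⟨e, he⟩ := (htree.connectedIn_sdiff _ hcon).cutEdges_nonempty ha hb
  simp only [cutEdges, mem_filter, mem_sdiff] at he
  exact he.1.2 ⟨he.1.1, he.2⟩

end IsTree'

section Leaves

variable {V E TV TE : Type*} [Fintype E] [Fintype TE] {g₁ g₂ : E → V} {t₁ t₂ : TE → TV}
  {M1 : TV → V} {L : Finset TV} {a b : TV}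

theorem mem_image_inter_iff (hinj : Set.InjOn M1 L) (ha : a ∈ L) (S : Finset TV) :
    M1 a ∈ (L ∩ S).image M1 ↔ a ∈ S := by
  rw [mem_image_iff_of_injOn hinj inter_subset_left ha, mem_inter, and_iff_right ha]

theorem mem_compVerts_iff (hinj : Set.InjOn M1 L) (ha : a ∈ L) (f : TE) :
    M1 a ∈ compVerts t₁ t₂ M1 L f ↔ ConnectedIn t₁ t₂ (univ \ {f}) a (t₁ f) := by
  rw [compVerts, mem_image_iff_of_injOn hinj (filter_subset _ _) ha, mem_filter,
    and_iff_right ha]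

theorem compVerts_ne_of_not_connectedIn (htree : IsTree' t₁ t₂) (hinj : Set.InjOn M1 L)
    (ha : a ∈ L) (hb : b ∈ L) {f : TE} (hsep : ¬ ConnectedIn t₁ t₂ (univ \ {f}) a b) :
    (M1 a ∈ compVerts t₁ t₂ M1 L f) ≠ (M1 b ∈ compVerts t₁ t₂ M1 L f) := by
  rw [mem_compVerts_iff hinj ha, mem_compVerts_iff hinj hb]
  exact fun h => hsep ((htree.connectedIn_sdiff_singleton_iff f a b).2 (iff_of_eq h))

theorem exists_cutEdges_sdiff_compVerts_ne (htree : IsTree' t₁ t₂) (hinj : Set.InjOn M1 L)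
    {S : Finset TV} {K : Finset TE} (ha : a ∈ L) (hb : b ∈ L) (haS : a ∈ S) (hbS : b ∉ S)
    (hK : ConnectedIn t₁ t₂ (univ \ K) a b) :
    ∃ f ∈ cutEdges t₁ t₂ univ S \ K,
      (M1 a ∈ compVerts t₁ t₂ M1 L f) ≠ (M1 b ∈ compVerts t₁ t₂ M1 L f) := by
  obtain ⟨f, hf, hsep⟩ := htree.exists_cutEdges_not_connectedIn haS hbS
  refine ⟨f, mem_sdiff.2 ⟨hf, fun hfK => hsep (hK.mono ?_)⟩,
    compVerts_ne_of_not_connectedIn htree hinj ha hb hsep⟩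
  exact sdiff_subset_sdiff subset_rfl (singleton_subset_iff.2 hfK)

theorem exists_cutEdges_sdiff_of_mem_cutEdges (htree : IsTree' t₁ t₂)
    (hM1 : Set.BijOn M1 L Set.univ) {X : Finset E} {S : Finset TV} {K : Finset TE} {e : E}
    (he : e ∈ cutEdges g₁ g₂ X ((L ∩ S).image M1))
    (hK : ∀ a ∈ L, ∀ b ∈ L, M1 a = g₁ e → M1 b = g₂ e → ConnectedIn t₁ t₂ (univ \ K) a b) :
    ∃ f ∈ cutEdges t₁ t₂ univ S \ K, e ∈ cutEdges g₁ g₂ univ (compVerts t₁ t₂ M1 L f) := by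
  obtain ⟨a, ha, hae⟩ := hM1.surjOn (Set.mem_univ (g₁ e))
  obtain ⟨b, hb, hbe⟩ := hM1.surjOn (Set.mem_univ (g₂ e))
  have hcross := (mem_filter.1 he).2
  rw [← hae, ← hbe, mem_image_inter_iff hM1.injOn ha, mem_image_inter_iff hM1.injOn hb]
    at hcross
  simp only [cutEdges, mem_filter, mem_univ, true_and, ← hae, ← hbe]
  by_cases haS : a ∈ S
  · exact exists_cutEdges_sdiff_compVerts_ne htree hM1.injOn ha hb haS
      (by simpa [haS] using hcross) (hK a ha b hb hae hbe)
  · obtain ⟨f, hf, hne⟩ := exists_cutEdges_sdiff_compVerts_ne htree hM1.injOn hb ha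
      (by simpa [haS] using hcross) haS (hK a ha b hb hae hbe).symm
    exact ⟨f, hf, hne.symm⟩

theorem le_sum_treeCap_of_mem_cutEdges (htree : IsTree' t₁ t₂)
    (hM1 : Set.BijOn M1 L Set.univ) {X : Finset E} {S : Finset TV} {K : Finset TE} {e : E}
    (he : e ∈ cutEdges g₁ g₂ X ((L ∩ S).image M1))
    (hK : ∀ a ∈ L, ∀ b ∈ L, M1 a = g₁ e → M1 b = g₂ e → ConnectedIn t₁ t₂ (univ \ K) a b)
    (x : E → NNReal) :
    x e ≤ ∑ f ∈ cutEdges t₁ t₂ univ S \ K, treeCap g₁ g₂ t₁ t₂ M1 L x f := by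
  obtain ⟨f, hf, hef⟩ := exists_cutEdges_sdiff_of_mem_cutEdges htree hM1 he hK
  calc x e ≤ treeCap g₁ g₂ t₁ t₂ M1 L x f := single_le_sum (fun _ _ => zero_le) hef
    _ ≤ _ := single_le_sum (fun _ _ => zero_le) hf

theorem sum_cutEdges_le_sum_treeCap (htree : IsTree' t₁ t₂) (hM1 : Set.BijOn M1 L Set.univ)
    (X : Finset E) (S : Finset TV) (x : E → NNReal) :
    ∑ e ∈ cutEdges g₁ g₂ X ((L ∩ S).image M1), x e ≤
      ∑ f ∈ cutEdges t₁ t₂ univ S, treeCap g₁ g₂ t₁ t₂ M1 L x f := by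
  refine (sum_le_sum_of_subset fun e he => ?_).trans (sum_biUnion_le_sum_sum _ _ x)
  obtain ⟨f, hf, hef⟩ := exists_cutEdges_sdiff_of_mem_cutEdges (K := ∅) htree hM1 he
    fun a _ b _ _ _ => by simpa using htree.1 a b
  exact mem_biUnion.2 ⟨f, (mem_sdiff.1 hf).1, hef⟩

theorem half_le_sum_treeCap_sdiff (htree : IsTree' t₁ t₂) (hM1 : Set.BijOn M1 L Set.univ)
    {X : Finset E} {S : Finset TV} {K : Finset TE} {x : E → NNReal}
    (hcut : 1 ≤ ∑ e ∈ cutEdges g₁ g₂ X ((L ∩ S).image M1), x e)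
    (hK : ∑ f ∈ K, treeCap g₁ g₂ t₁ t₂ M1 L x f ≤ 1 / 2) :
    1 / 2 ≤ ∑ f ∈ cutEdges t₁ t₂ univ S \ K, treeCap g₁ g₂ t₁ t₂ M1 L x f := by
  have hsplit : ∑ f ∈ cutEdges t₁ t₂ univ S, treeCap g₁ g₂ t₁ t₂ M1 L x f ≤
      1 / 2 + ∑ f ∈ cutEdges t₁ t₂ univ S \ K, treeCap g₁ g₂ t₁ t₂ M1 L x f := by
    rw [← sum_inter_add_sum_sdiff _ K]
    gcongr
    exact (sum_le_sum_of_subset inter_subset_right).trans hK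
  refine le_of_add_le_add_left (a := (1 / 2 : NNReal)) ?_
  rw [add_halves]
  exact hcut.trans ((sum_cutEdges_le_sum_treeCap htree hM1 X S x).trans hsplit)

end Leaves

section Cuts

variable {V E : Type*} {g₁ g₂ : E → V} {Safe H : Finset E} {p q : ℕ} {S : Finset V}

theorem FlexConnected.add_le_card_cutEdges [Fintype E] {u v : V}
    (h : FlexConnected g₁ g₂ Safeᶜ p q H u v) (hu : u ∈ S) (hv : v ∉ S)
    (hsafe : (cutEdges g₁ g₂ H S ∩ Safe).card ≤ p - 1) :
    p + q ≤ (cutEdges g₁ g₂ H S).card := by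
  set C := cutEdges g₁ g₂ H S
  by_contra! hlt
  -- delete as many unsafe edges of `C` as allowed, then the rest of `C`, which is too small
  obtain ⟨U, hU, hUcard⟩ := exists_subset_card_eq (min_le_right q (C \ Safe).card)
  have hUsafe : U ⊆ Safeᶜ := fun e he => mem_compl.2 (mem_sdiff.1 (hU he)).2
  have hD : (C \ U).card ≤ p - 1 := by
    have := card_inter_add_card_sdiff C Safe
    rw [card_sdiff_of_subset (hU.trans sdiff_subset), hUcard]
    omega
  have hconn := h U hUsafe (hUcard ▸ min_le_left _ _) (C \ U)
    (sdiff_subset_sdiff (filter_subset _ _) subset_rfl) hD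
  obtain ⟨e, he⟩ := hconn.cutEdges_nonempty hu hv
  simp only [C, cutEdges, mem_filter, mem_sdiff] at he
  tauto

theorem Violated.of_cutEdges_subset [Fintype E] {k : ℕ} {st : Fin k → V × V} {S₀ : Finset V}
    (hS₀ : Violated g₁ g₂ Safe p q st H S₀)
    (hH : ∀ i, FlexConnected g₁ g₂ Safeᶜ p q H (st i).1 (st i).2) {i : Fin k}
    (hs : (st i).1 ∈ S) (ht : (st i).2 ∉ S)
    (hsub : cutEdges g₁ g₂ H S ⊆ cutEdges g₁ g₂ H S₀) :
    Violated g₁ g₂ Safe p q st H S := by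
  obtain ⟨-, hcard, hsafe⟩ := hS₀
  have hsafe' := (card_le_card (inter_subset_inter hsub subset_rfl)).trans hsafe
  have heq : cutEdges g₁ g₂ H S = cutEdges g₁ g₂ H S₀ :=
    eq_of_subset_of_card_le hsub (hcard ▸ (hH i).add_le_card_cutEdges hs ht hsafe')
  exact ⟨⟨i, by simp [hs, ht]⟩, heq ▸ hcard, hsafe'⟩

end Cuts

section Shattered

variable {V E TV TE : Type*} [Fintype V] [Fintype TE] {g₁ g₂ : E → V} {t₁ t₂ : TE → TV}
  {M1 : TV → V} {L : Finset TV} {M2 : TE → Finset E} {k : ℕ} {st : Fin k → V × V}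
  {H F : Finset E} {P : Finset V × Finset V}

theorem mem_Qcomp_iff {u v : V} : u ∈ Qcomp g₁ g₂ H v ↔ ConnectedIn g₁ g₂ H u v := by
  simp [Qcomp]

theorem exists_terminals_of_mem_ZF (hP : P ∈ ZF g₁ g₂ t₁ t₂ M1 L M2 st H F) :
    ∃ i, (st i).1 ∈ P.1 ∧ (st i).2 ∈ P.2 := by
  obtain ⟨i, A, B, -, -, -, hP1, hP2, -⟩ := hP
  exact ⟨i, hP1 ▸ mem_union_right _ (mem_Qcomp_iff.2 (.refl _ _)),
    hP2 ▸ mem_union_right _ (mem_Qcomp_iff.2 (.refl _ _))⟩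

theorem subset_or_subset_of_mem_ZF (hP : P ∈ ZF g₁ g₂ t₁ t₂ M1 L M2 st H F) {v : V}
    (hv : IsShattered t₁ t₂ M1 L M2 F (Qcomp g₁ g₂ (H \ F) v)) :
    Qcomp g₁ g₂ (H \ F) v ⊆ P.1 ∨ Qcomp g₁ g₂ (H \ F) v ⊆ P.2 := by
  obtain ⟨i, A, B, -, -, hAB, hP1, hP2, -⟩ := hP
  rw [hP1, hP2]
  exact (hAB v hv).imp (·.trans subset_union_left) (·.trans subset_union_left)

theorem connectedIn_of_mem_cutEdges_sdiff (hP : P ∈ ZF g₁ g₂ t₁ t₂ M1 L M2 st H F)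
    {W : Finset V} (hP1 : P.1 ⊆ W) (hP2 : Disjoint P.2 W) {e : E}
    (he : e ∈ cutEdges g₁ g₂ (H \ F) W) :
    ∀ a ∈ L, ∀ b ∈ L, M1 a = g₁ e → M1 b = g₂ e →
      ConnectedIn t₁ t₂ (univ \ Minv M2 F) a b := by
  intro a ha b hb hae hbe
  by_contra hab
  obtain ⟨heHF, hcross⟩ := mem_filter.1 he
  have h₁ : g₁ e ∈ Qcomp g₁ g₂ (H \ F) (g₁ e) := mem_Qcomp_iff.2 (.refl _ _)
  have h₂ : g₂ e ∈ Qcomp g₁ g₂ (H \ F) (g₁ e) := mem_Qcomp_iff.2 (.symm (.of_mem heHF))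
  have hshat : IsShattered t₁ t₂ M1 L M2 F (Qcomp g₁ g₂ (H \ F) (g₁ e)) :=
    ⟨a, ha, b, hb, by rwa [hae], by rwa [hbe], hab⟩
  rcases subset_or_subset_of_mem_ZF hP hshat with hQ | hQ
  · exact hcross (propext (iff_of_true (hP1 (hQ h₁)) (hP1 (hQ h₂))))
  · exact hcross (propext (iff_of_false (disjoint_left.1 hP2 (hQ h₁))
      (disjoint_left.1 hP2 (hQ h₂))))

end Shattered

theorem flow_for_each_pair_general {V E TV TE : Type*} [Fintype V] [Fintype E] [Fintype TE]
    (g₁ g₂ : E → V) (Safe Unsafe : Finset E) (hpart : Unsafe = Safeᶜ)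
    (t₁ t₂ : TE → TV) (htree : IsTree' t₁ t₂)
    (M1 : TV → V) (L : Finset TV) (hM1 : Set.BijOn M1 (↑L) Set.univ)
    (M2 : TE → Finset E)
    (p q : ℕ) (k : ℕ) (st : Fin k → V × V) (H : Finset E)
    (hH : ∀ i : Fin k, FlexConnected g₁ g₂ Unsafe p q H (st i).1 (st i).2)
    (S₀ : Finset V) (hS₀ : Violated g₁ g₂ Safe p q st H S₀)
    (F : Finset E) (hF : F = cutEdges g₁ g₂ H S₀)
    (α : NNReal) (hα : α ≤ 1 / 2)
    (x : E → NNReal) (hxH : ∀ e ∈ H, x e = α)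
    (hLP : ∀ S : Finset V, Violated g₁ g₂ Safe p q st H S →
      1 ≤ ∑ e ∈ cutEdges g₁ g₂ Hᶜ S, x e)
    (hgood : ∑ f ∈ Minv M2 F, treeCap g₁ g₂ t₁ t₂ M1 L x f ≤ 1 / 2) :
    ∀ P ∈ ZF g₁ g₂ t₁ t₂ M1 L M2 st H F, ∀ S : Finset TV,
      (∀ a ∈ L, M1 a ∈ P.1 → a ∈ S) → (∀ a ∈ L, M1 a ∈ P.2 → a ∉ S) →
      α ≤ ∑ f ∈ cutEdges t₁ t₂ Finset.univ S \ Minv M2 F,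
            treeCap g₁ g₂ t₁ t₂ M1 L x f := by
  subst hpart
  rintro P hP S hSA hSB
  set W := (L ∩ S).image M1
  have hleaf : ∀ v, ∃ a ∈ L, M1 a = v := fun v => hM1.surjOn (Set.mem_univ v)
  have hP1 : P.1 ⊆ W := fun v hv => by
    obtain ⟨a, ha, rfl⟩ := hleaf v
    exact (mem_image_inter_iff hM1.injOn ha S).2 (hSA a ha hv)
  have hP2 : Disjoint P.2 W := disjoint_left.2 fun v hv hvW => by
    obtain ⟨a, ha, rfl⟩ := hleaf v
    exact hSB a ha hv ((mem_image_inter_iff hM1.injOn ha S).1 hvW)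
  by_cases hcross : (cutEdges g₁ g₂ (H \ F) W).Nonempty
  · obtain ⟨e, he⟩ := hcross
    rw [← hxH e (mem_sdiff.1 (mem_filter.1 he).1).1]
    exact le_sum_treeCap_of_mem_cutEdges htree hM1 he
      (connectedIn_of_mem_cutEdges_sdiff hP hP1 hP2 he) x
  · obtain ⟨i, hs, ht⟩ := exists_terminals_of_mem_ZF hP
    have hsub : cutEdges g₁ g₂ H W ⊆ F := fun e he => by_contra fun heF =>
      hcross ⟨e, mem_filter.2 ⟨mem_sdiff.2 ⟨(mem_filter.1 he).1, heF⟩, (mem_filter.1 he).2⟩⟩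
    have hviol := hS₀.of_cutEdges_subset hH (hP1 hs) (disjoint_left.1 hP2 ht) (hF ▸ hsub)
    exact hα.trans (half_le_sum_treeCap_sdiff htree hM1 (hLP W hviol) hgood)

/-- On a good tree for a violating edge set `F`, for every pair `(A, B) ∈ Z_F` and every
tree vertex set `S` containing all leaves with `M1`-image in `A` and no leaf with
`M1`-image in `B`, the tree cut `δ_{E(𝒯)}(S)` has capacity at least `α` outside
`M⁻¹(F)`. -/
theorem flow_for_each_pair {V E TV TE : Type*} [Fintype V] [Fintype E] [Fintype TE]
    (g₁ g₂ : E → V) (Safe Unsafe : Finset E) (hpart : Unsafe = Safeᶜ)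
    (t₁ t₂ : TE → TV) (htree : IsTree' t₁ t₂)
    (M1 : TV → V) (L : Finset TV) (hM1 : Set.BijOn M1 (↑L) Set.univ)
    (M2 : TE → Finset E)
    (hM2 : ∀ f : TE, ConnectedIn g₁ g₂ (M2 f) (M1 (t₁ f)) (M1 (t₂ f)))
    (p q : ℕ) (hp : 1 ≤ p) (k : ℕ) (st : Fin k → V × V) (H : Finset E)
    (hH : ∀ i : Fin k, FlexConnected g₁ g₂ Unsafe p q H (st i).1 (st i).2)
    (S₀ : Finset V) (hS₀ : Violated g₁ g₂ Safe p q st H S₀)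
    (F : Finset E) (hF : F = cutEdges g₁ g₂ H S₀)
    (α : NNReal) (hα0 : 0 < α) (hα : α ≤ 1 / 2)
    (x : E → NNReal) (hxH : ∀ e ∈ H, x e = α)
    (hLP : ∀ S : Finset V, Violated g₁ g₂ Safe p q st H S →
      1 ≤ ∑ e ∈ cutEdges g₁ g₂ Hᶜ S, x e)
    (hgood : ∑ f ∈ Minv M2 F, treeCap g₁ g₂ t₁ t₂ M1 L x f ≤ 1 / 2) :
    ∀ P ∈ ZF g₁ g₂ t₁ t₂ M1 L M2 st H F, ∀ S : Finset TV,
      (∀ a ∈ L, M1 a ∈ P.1 → a ∈ S) → (∀ a ∈ L, M1 a ∈ P.2 → a ∉ S) →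
      α ≤ ∑ f ∈ cutEdges t₁ t₂ Finset.univ S \ Minv M2 F,
            treeCap g₁ g₂ t₁ t₂ M1 L x f :=
  flow_for_each_pair_general g₁ g₂ Safe Unsafe hpart t₁ t₂ htree M1 L hM1 M2 p q k st H hH S₀ hS₀ F
    hF α hα x hxH hLP hgood
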